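/- Take K = ℂ and specialize q₁ = 0, q₂ = 1, so that μ(x,y) = x/(x−y). Then for every n ≥ 1 and every integer sequence (i₁,…,i_n), the iterated shuffle product satisfies z^{i₁} * z^{i₂} * ⋯ * z^{i_n} = (1/n!) · ( ∑_{σ∈S_n} z_{σ(1)}^{i₁+n−1} z_{σ(2)}^{i₂+n−2} ⋯ z_{σ(n)}^{i_n} ) / Δ_n in ℂ(z₁,…,z_n); in particular it is a nonzero rational multiple of the symmetrization of z₁^{i₁+n−1} z₂^{i₂+n−2} ⋯ z_n^{i_n} divided by the Vandermonde determinant Δ_n. -/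
import Mathlib


open MvPolynomial
set_option synthInstance.maxHeartbeats 1000000
set_option maxHeartbeats 1000000

noncomputable section ShuffleAlgebra

variable (K : Type) [Field K]

/-- The field of rational functions in countably many variables `z 0, z 1, …` over `K`. -/
abbrev RF := FractionRing (MvPolynomial ℕ K)

/-- The variable `z i` as a rational function. -/
def Z (i : ℕ) : RF K := algebraMap (MvPolynomial ℕ K) (RF K) (X i)

/-- A constant, viewed as a rational function. -/
def cst (q : K) : RF K := algebraMap (MvPolynomial ℕ K) (RF K) (C q)

/-- Substitution `z i ↦ z (f i)` for an injective `f`, as a ring homomorphism of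
rational functions. -/
def ren (f : ℕ → ℕ) (hf : Function.Injective f) : RF K →+* RF K :=
  IsFractionRing.lift (g := (algebraMap (MvPolynomial ℕ K) (RF K)).comp (rename f).toRingHom)
    ((IsFractionRing.injective (MvPolynomial ℕ K) (RF K)).comp (rename_injective f hf))

/-- A permutation of `Fin k` extended (by the identity) to a permutation of `ℕ`. -/
def natPerm (k : ℕ) (σ : Equiv.Perm (Fin k)) : Equiv.Perm ℕ :=
  σ.extendDomain Fin.equivSubtype

/-- `Alt_{S_k}(F) = (1/k!) ∑_{σ ∈ S_k} sgn(σ) F(z_{σ(1)},…,z_{σ(k)})`. -/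
def Alt (k : ℕ) (F : RF K) : RF K :=
  (k.factorial : RF K)⁻¹ *
    ∑ σ : Equiv.Perm (Fin k),
      ((Equiv.Perm.sign σ : ℤ) : RF K) * ren K (natPerm k σ) (natPerm k σ).injective F

variable (q₁ q₂ : K)

/-- `μ(x,y) = (x − q₁y)(x − q₂y)/(x − y)²`. -/
def mu (x y : RF K) : RF K := (x - cst K q₁ * y) * (x - cst K q₂ * y) / (x - y) ^ 2

/-- The shuffle product of `F` (a function of `z 0, …, z (n-1)`) and `G`
(a function of `z 0, …, z (m-1)`). -/
def shuffle (n m : ℕ) (F G : RF K) : RF K :=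
  Alt K (n + m) (F * ren K (· + n) (add_left_injective n) G *
    ∏ i : Fin n, ∏ j : Fin m, mu K q₁ q₂ (Z K i.val) (Z K (n + j.val)))

/-- The Vandermonde determinant `Δ_n = ∏_{i<j} (z i − z j)`. -/
def vand (n : ℕ) : RF K :=
  algebraMap (MvPolynomial ℕ K) (RF K)
    (∏ j ∈ Finset.range n, ∏ i ∈ Finset.range j, (X i - X j))

/-- `f` is a symmetric Laurent polynomial in the variables `z 0, …, z (n-1)`. -/
def IsSymLaurent (n : ℕ) (f : RF K) : Prop :=
  (∃ (p : MvPolynomial ℕ K) (N : ℕ), (↑p.vars : Set ℕ) ⊆ Set.Iio n ∧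
      f * algebraMap (MvPolynomial ℕ K) (RF K) ((∏ i ∈ Finset.range n, X i) ^ N)
        = algebraMap (MvPolynomial ℕ K) (RF K) p) ∧
  ∀ σ : Equiv.Perm (Fin n), ren K (natPerm n σ) (natPerm n σ).injective f = f

/-- The `n`-th graded component `S_n` of the shuffle algebra: quotients `f/Δ_n` with
`f` a symmetric Laurent polynomial in `z 0, …, z (n-1)`. -/
def Sgr (n : ℕ) : Set (RF K) :=
  {F | ∃ f : RF K, IsSymLaurent K n f ∧ F = f / vand K n}

/-- Iterated (left-to-right) shuffle product of a list of elements of `S₁`. -/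
def iterSh (l : List (RF K)) : RF K :=
  (l.foldl (fun acc f => (shuffle K q₁ q₂ acc.2 1 acc.1 f, acc.2 + 1)) ((1 : RF K), 0)).1

/-- The iterated shuffle product `z^{i₁} * ⋯ * z^{i_n}`. -/
def zpows (l : List ℤ) : RF K := iterSh K q₁ q₂ (l.map fun i => Z K 0 ^ i)

/-- `F` is defined at the point `α` and its value there is `v`. -/
def EvalAt (α : ℕ → K) (F : RF K) (v : K) : Prop :=
  ∃ p q : MvPolynomial ℕ K, eval α q ≠ 0 ∧
    F * algebraMap (MvPolynomial ℕ K) (RF K) q = algebraMap (MvPolynomial ℕ K) (RF K) p ∧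
    eval α p = v * eval α q

lemma ren_algebraMap (f : ℕ → ℕ) (hf : Function.Injective f) (p : MvPolynomial ℕ K) :
    ren K f hf (algebraMap (MvPolynomial ℕ K) (RF K) p)
      = algebraMap (MvPolynomial ℕ K) (RF K) (rename f p) :=
  IsFractionRing.lift_algebraMap _ _

lemma ren_Z (f : ℕ → ℕ) (hf : Function.Injective f) (i : ℕ) :
    ren K f hf (Z K i) = Z K (f i) := by
  rw [Z, ren_algebraMap, rename_X]; rfl

lemma natPerm_lt {k : ℕ} (σ : Equiv.Perm (Fin k)) {i : ℕ} (h : i < k) :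
    natPerm k σ i = (σ ⟨i, h⟩).val := by
  rw [natPerm, Equiv.Perm.extendDomain_apply_subtype σ Fin.equivSubtype (p := fun i => i < k) h]
  rfl

lemma Z_ne_zero (i : ℕ) : Z K i ≠ 0 := by
  simp only [Z, ne_eq, map_eq_zero_iff _ (IsFractionRing.injective (MvPolynomial ℕ K) (RF K))]
  exact X_ne_zero i

lemma Z_sub_Z_ne_zero {i j : ℕ} (h : i ≠ j) : Z K i - Z K j ≠ 0 := by
  rw [Z, Z, ← map_sub, ne_eq, map_eq_zero_iff _ (IsFractionRing.injective (MvPolynomial ℕ K) (RF K)),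
    sub_eq_zero]
  exact fun hx => h (by simpa using congrArg (fun p => p.vars) hx)


lemma vand_eq (m : ℕ) :
    vand K m = ∏ i : Fin m, ∏ j ∈ Finset.Ioi i, (Z K i.val - Z K j.val) := by
  have Zdef : ∀ i, algebraMap (MvPolynomial ℕ K) (RF K) (X i) = Z K i := fun _ => rfl
  rw [vand, map_prod]
  simp only [map_prod, map_sub, Zdef]
  rw [Finset.prod_comm' (t' := Finset.range m) (s' := fun i => Finset.Ioo i m)
    (by intro x y; simp only [Finset.mem_range, Finset.mem_Ioo]; omega)]
  rw [← Fin.prod_univ_eq_prod_range (fun i => ∏ j ∈ Finset.Ioo i m,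
    (Z K i - Z K j)) m]
  refine Finset.prod_congr rfl fun i _ => ?_
  refine Finset.prod_bij' (i := fun j hj => (⟨j, (Finset.mem_Ioo.mp hj).2⟩ : Fin m))
    (j := fun j _ => j.val) ?_ ?_ ?_ ?_ ?_
  · intro a ha
    rw [Finset.mem_Ioi, Fin.lt_def]
    exact (Finset.mem_Ioo.mp ha).1
  · intro a ha
    rw [Finset.mem_Ioo]
    exact ⟨Fin.lt_def.mp (Finset.mem_Ioi.mp ha), a.isLt⟩
  · intros; rfl
  · intros; rfl
  · intros; rfl

lemma W_det {m : ℕ} (v : Fin m → RF K) :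
    ∏ i : Fin m, ∏ j ∈ Finset.Ioi i, (v i - v j)
      = (∏ i : Fin m, ∏ _j ∈ Finset.Ioi i, (-1 : RF K)) * (Matrix.vandermonde v).det := by
  rw [Matrix.det_vandermonde, ← Finset.prod_mul_distrib]
  refine Finset.prod_congr rfl fun i _ => ?_
  rw [← Finset.prod_mul_distrib]
  exact Finset.prod_congr rfl fun j _ => by ring

lemma ren_vand {m : ℕ} (τ : Equiv.Perm (Fin m)) :
    ren K (natPerm m τ) (natPerm m τ).injective (vand K m)
      = ((Equiv.Perm.sign τ : ℤ) : RF K) * vand K m := by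
  have h1 : ren K (natPerm m τ) (natPerm m τ).injective (vand K m)
      = ∏ i : Fin m, ∏ j ∈ Finset.Ioi i, ((fun t : Fin m => Z K (τ t).val) i
          - (fun t : Fin m => Z K (τ t).val) j) := by
    rw [vand_eq, map_prod]
    refine Finset.prod_congr rfl fun i _ => ?_
    rw [map_prod]
    refine Finset.prod_congr rfl fun j _ => ?_
    rw [map_sub, ren_Z, ren_Z, natPerm_lt τ i.isLt, natPerm_lt τ j.isLt]
  have h2 : Matrix.vandermonde (fun t : Fin m => Z K (τ t).val)
      = (Matrix.vandermonde (fun t : Fin m => Z K t.val)).submatrix τ id := by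
    ext i j; simp [Matrix.vandermonde_apply]
  rw [h1, W_det, h2, Matrix.det_permute, vand_eq, W_det]
  push_cast
  ring

lemma vand_succ (n : ℕ) :
    vand K (n + 1) = vand K n * ∏ j : Fin n, (Z K j.val - Z K n) := by
  have Zdef : ∀ i, algebraMap (MvPolynomial ℕ K) (RF K) (X i) = Z K i := fun _ => rfl
  rw [vand, Finset.prod_range_succ, map_mul, ← vand, map_prod]
  simp only [map_sub, Zdef]
  rw [← Fin.prod_univ_eq_prod_range (fun i => Z K i - Z K n) n]

lemma vand_ne_zero (n : ℕ) : vand K n ≠ 0 := by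
  rw [vand, ne_eq, map_eq_zero_iff _ (IsFractionRing.injective (MvPolynomial ℕ K) (RF K))]
  refine Finset.prod_ne_zero_iff.mpr fun j hj => Finset.prod_ne_zero_iff.mpr fun i hi => ?_
  rw [sub_ne_zero]
  intro hx
  have : i = j := by simpa using congrArg (fun p => p.vars) hx
  subst this
  exact absurd (Finset.mem_range.mp hi) (lt_irrefl i)


lemma sign_mul_div (s a b : RF K) (hs : s * s = 1) : s * (a / (s * b)) = a / b := by
  have hs0 : s ≠ 0 := fun h => by simp [h] at hs
  rw [← mul_div_assoc, mul_div_mul_left a b hs0]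

def finemb (n : ℕ) : Fin n ≃ {x : Fin (n + 1) // x.val < n} where
  toFun t := ⟨t.castSucc, t.isLt⟩
  invFun x := ⟨x.1.val, x.2⟩
  left_inv t := rfl
  right_inv x := by ext; rfl

def extP {n : ℕ} (σ : Equiv.Perm (Fin n)) : Equiv.Perm (Fin (n + 1)) :=
  σ.extendDomain (finemb n)

lemma extP_castSucc {n : ℕ} (σ : Equiv.Perm (Fin n)) (t : Fin n) :
    extP σ t.castSucc = (σ t).castSucc := by
  rw [extP, Equiv.Perm.extendDomain_apply_subtype σ (finemb n) (show (t.castSucc).val < n from t.isLt)]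
  rfl

lemma extP_last {n : ℕ} (σ : Equiv.Perm (Fin n)) :
    extP σ (Fin.last n) = Fin.last n :=
  Equiv.Perm.extendDomain_apply_not_subtype σ (finemb n) (by simp)

def Msum (n : ℕ) (e : Fin n → ℤ) : RF K :=
  ∑ σ : Equiv.Perm (Fin n), ∏ t : Fin n, Z K (σ t).val ^ e t

def Ff (n : ℕ) (e : Fin n → ℤ) : RF K :=
  (n.factorial : RF K)⁻¹ * Msum K n e / vand K n

lemma mu_spec (x y : RF K) (hxy : x - y ≠ 0) : mu K 0 1 x y = x / (x - y) := by
  have h0 : cst K 0 = 0 := by simp [cst]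
  have h1 : cst K 1 = 1 := by simp [cst]
  rw [mu, h0, h1, zero_mul, one_mul, sub_zero, pow_two]
  rw [mul_div_mul_right x (x - y) hxy]

lemma step [CharZero K] (n : ℕ) (e : Fin n → ℤ) (i : ℤ) :
    shuffle K 0 1 n 1 (Ff K n e) (Z K 0 ^ i)
      = Ff K (n + 1) (Fin.snoc (fun t => e t + 1) i) := by
  have hfac : ((n.factorial : RF K)) ≠ 0 := Nat.cast_ne_zero.mpr n.factorial_ne_zero
  have hsub : ∀ j : Fin n, Z K j.val - Z K n ≠ 0 :=
    fun j => Z_sub_Z_ne_zero K (by omega)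
  have hB : (∏ j : Fin n, (Z K j.val - Z K n)) ≠ 0 :=
    Finset.prod_ne_zero_iff.mpr fun j _ => hsub j
  -- the mu product
  have hP : (∏ i : Fin n, ∏ j : Fin 1, mu K 0 1 (Z K i.val) (Z K (n + j.val)))
      = (∏ j : Fin n, Z K j.val) / ∏ j : Fin n, (Z K j.val - Z K n) := by
    rw [← Finset.prod_div_distrib]
    refine Finset.prod_congr rfl fun t _ => ?_
    rw [Fin.prod_univ_one]
    show mu K 0 1 (Z K t.val) (Z K (n + 0)) = _
    rw [Nat.add_zero, mu_spec K _ _ (hsub t)]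
  -- the renamed G
  have hG : ren K (· + n) (add_left_injective n) (Z K 0 ^ i) = Z K n ^ i := by
    rw [map_zpow₀, ren_Z, Nat.zero_add]
  -- the inner rational function
  have hT : Ff K n e * ren K (· + n) (add_left_injective n) (Z K 0 ^ i) *
        (∏ i : Fin n, ∏ j : Fin 1, mu K 0 1 (Z K i.val) (Z K (n + j.val)))
      = (n.factorial : RF K)⁻¹ *
          (∑ σ : Equiv.Perm (Fin n),
            (∏ t : Fin n, Z K (σ t).val ^ (e t + 1)) * Z K n ^ i) / vand K (n + 1) := by
    rw [hP, hG, vand_succ, Ff]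
    have hM : Msum K n e * ((∏ j : Fin n, Z K j.val) * Z K n ^ i)
        = ∑ σ : Equiv.Perm (Fin n),
            (∏ t : Fin n, Z K (σ t).val ^ (e t + 1)) * Z K n ^ i := by
      rw [Msum, Finset.sum_mul]
      refine Finset.sum_congr rfl fun σ _ => ?_
      rw [← mul_assoc]
      congr 1
      rw [← Equiv.prod_comp σ (fun t => Z K t.val), ← Finset.prod_mul_distrib]
      exact Finset.prod_congr rfl fun t _ => (zpow_add_one₀ (Z_ne_zero K _) (e t)).symm
    rw [← hM]
    field_simp [vand_ne_zero]
  rw [shuffle, hT, Alt]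
  set e' : Fin (n + 1) → ℤ := Fin.snoc (fun t => e t + 1) i with he'
  have key : ∀ τ : Equiv.Perm (Fin (n + 1)),
      ((Equiv.Perm.sign τ : ℤ) : RF K) * ren K (natPerm (n + 1) τ) (natPerm (n + 1) τ).injective
        ((n.factorial : RF K)⁻¹ *
          (∑ σ : Equiv.Perm (Fin n),
            (∏ t : Fin n, Z K (σ t).val ^ (e t + 1)) * Z K n ^ i) / vand K (n + 1))
      = (n.factorial : RF K)⁻¹ / vand K (n + 1) *
          ∑ σ : Equiv.Perm (Fin n), ∏ t : Fin (n + 1), Z K ((τ * extP σ) t).val ^ e' t := by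
    intro τ
    have hren : ren K (natPerm (n + 1) τ) (natPerm (n + 1) τ).injective
        (∑ σ : Equiv.Perm (Fin n),
          (∏ t : Fin n, Z K (σ t).val ^ (e t + 1)) * Z K n ^ i)
        = ∑ σ : Equiv.Perm (Fin n), ∏ t : Fin (n + 1), Z K ((τ * extP σ) t).val ^ e' t := by
      rw [map_sum]
      refine Finset.sum_congr rfl fun σ _ => ?_
      rw [map_mul, map_prod, Fin.prod_univ_castSucc (f := fun t => Z K ((τ * extP σ) t).val ^ e' t)]
      congr 1
      · refine Finset.prod_congr rfl fun t _ => ?_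
        rw [map_zpow₀, ren_Z, natPerm_lt τ (lt_trans (σ t).isLt n.lt_succ_self)]
        have : (⟨(σ t).val, lt_trans (σ t).isLt n.lt_succ_self⟩ : Fin (n + 1))
            = (σ t).castSucc := rfl
        rw [this, he']
        have h2 : (τ * extP σ) t.castSucc = τ ((σ t).castSucc) := by
          rw [Equiv.Perm.mul_apply, extP_castSucc]
        rw [h2, Fin.snoc_castSucc]
      · rw [map_zpow₀, ren_Z, natPerm_lt τ n.lt_succ_self]
        have : (⟨n, n.lt_succ_self⟩ : Fin (n + 1)) = Fin.last n := rfl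
        rw [this, he']
        have h2 : (τ * extP σ) (Fin.last n) = τ (Fin.last n) := by
          rw [Equiv.Perm.mul_apply, extP_last]
        rw [h2, Fin.snoc_last]
    rw [map_div₀, map_mul, map_inv₀, map_natCast, ren_vand, hren]
    rw [sign_mul_div _ _ _ _ (by push_cast [← Int.cast_mul, Int.units_mul_self]; norm_num)]
    ring
  rw [Finset.sum_congr rfl fun τ _ => key τ, ← Finset.mul_sum, Finset.sum_comm]
  have hre : ∀ σ : Equiv.Perm (Fin n),
      (∑ τ : Equiv.Perm (Fin (n + 1)), ∏ t : Fin (n + 1), Z K ((τ * extP σ) t).val ^ e' t)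
      = Msum K (n + 1) e' := fun σ =>
    Fintype.sum_equiv (Equiv.mulRight (extP σ))
      (fun τ => ∏ t : Fin (n + 1), Z K ((τ * extP σ) t).val ^ e' t)
      (fun ρ => ∏ t : Fin (n + 1), Z K (ρ t).val ^ e' t) (fun τ => rfl)
  rw [Finset.sum_congr rfl fun σ _ => hre σ, Finset.sum_const, Finset.card_univ,
    Fintype.card_perm, Fintype.card_fin, nsmul_eq_mul, Ff,
    div_mul_eq_mul_div, inv_mul_cancel_left₀ hfac, mul_div_assoc]

lemma Ff_congr {n m : ℕ} (h : n = m) (e : Fin n → ℤ) (f : Fin m → ℤ)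
    (hef : ∀ t : Fin n, e t = f (Fin.cast h t)) : Ff K n e = Ff K m f := by
  subst h
  have : e = f := funext fun t => hef t
  rw [this]

lemma fold_eq [CharZero K] (l : List ℤ) :
    List.foldl (fun acc f => (shuffle K 0 1 acc.2 1 acc.1 f, acc.2 + 1))
      ((1 : RF K), (0 : ℕ)) (l.map fun i => Z K 0 ^ i)
    = (Ff K l.length (fun t => l.get t + ((l.length : ℤ) - 1 - (t.val : ℤ))), l.length) := by
  induction l using List.reverseRecOn with
  | nil =>
      simp only [List.map_nil, List.foldl_nil, List.length_nil]
      refine Prod.ext ?_ rfl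
      simp [Ff, Msum, vand]
  | append_singleton l a ih =>
      rw [List.map_append, List.foldl_append, ih]
      simp only [List.map_cons, List.map_nil, List.foldl_cons, List.foldl_nil]
      rw [step K l.length _ a]
      have hlen : l.length + 1 = (l ++ [a]).length := by simp
      refine Prod.ext ?_ hlen
      refine Ff_congr K hlen _ _ fun t => ?_
      induction t using Fin.lastCases with
      | last =>
          rw [Fin.snoc_last]
          have h1 : (l ++ [a]).get (Fin.cast hlen (Fin.last l.length)) = a := by
            simp [List.get_eq_getElem, List.getElem_concat_length]
          rw [h1]
          have h2 : (((l ++ [a]).length : ℤ) - 1 - ((Fin.cast hlen (Fin.last l.length)).val : ℤ))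
              = 0 := by
            simp
          rw [h2, add_zero]
      | cast u =>
          rw [Fin.snoc_castSucc]
          have h1 : (l ++ [a]).get (Fin.cast hlen u.castSucc) = l.get u := by
            simp [List.get_eq_getElem, List.getElem_append_left u.isLt]
          rw [h1]
          have h2 : (((l ++ [a]).length : ℤ) - 1 - ((Fin.cast hlen u.castSucc).val : ℤ))
              = ((l.length : ℤ) - 1 - (u.val : ℤ)) + 1 := by
            have : ((l ++ [a]).length : ℤ) = (l.length : ℤ) + 1 := by push_cast [← hlen]; ring
            rw [this]
            simp only [Fin.coe_cast, Fin.coe_castSucc]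
            ring
          rw [h2]
          ring


end ShuffleAlgebra

/-- at the specialization `q₁ = 0`, `q₂ = 1` over `ℂ`, the iterated shuffle
product `z^{i₁} * ⋯ * z^{i_n}` equals
`(1/n!) (∑_{σ ∈ S_n} z_{σ(1)}^{i₁+n−1} ⋯ z_{σ(n)}^{i_n}) / Δ_n`. -/
theorem zpows_specialization (n : ℕ) (hn : 1 ≤ n) (l : List ℤ) (hl : l.length = n) :
    zpows ℂ 0 1 l =
      (n.factorial : RF ℂ)⁻¹ *
        (∑ σ : Equiv.Perm (Fin n), ∏ t : Fin n,
          Z ℂ (σ t).val ^ (l.get (Fin.cast hl.symm t) + ((n : ℤ) - 1 - (t.val : ℤ)))) /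
        vand ℂ n := by
  subst hl
  rw [zpows, iterSh, fold_eq, Ff, Msum]
  simp
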